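/- arXiv:2001.03049 — 2 statements merged into one kernel-verified Lean document; each statement's English description precedes it below -/
import Mathlib

section
/- Converse for the oblivious Gaussian AVMAC at zero rate: If L·P₁ < N and L·P₂ < N, then no rate pair (R₁,R₂) with R₁ > 0 and R₂ > 0 is achievable for L-list decoding over the oblivious Gaussian AVMAC with parameters P₁, P₂, N, σ². More precisely, for every sequence of L-list codes of blocklength n with message-set sizes M_n → ∞ and W_n → ∞, the average probability of error (against the worst admissible jammer, whose state vector satisfies ‖s̲‖₂ ≤ √(nN) with probability one) is bounded away from 0 along the sequence; hence the L-list-decoding capacity region is {(0,0)}. -/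
/-!
Only the first user is attacked. For an `(L+1)`-set `U` of its codewords and `j ∈ U`, the jammer
sends `s = ∑_{i ∈ U \ {j}} x_i - L c`; then `x_j + s = ∑_{i ∈ U} x_i - L c` does not depend on `j`,
so a list of size `L` misses some member of `U` whatever the noise. A jammer choosing among such
states at random therefore forces an error probability bounded away from `0`, provided the
admissible sets `U` make up a fixed fraction of all `(L+1)`-subsets of a subcode of linear size.

The state is admissible (`‖s‖² ≤ nN`) as soon as the `x_i - c`, `i ∈ U`, have energy at most `nP₁`
and pairwise inner products at most `nε`, where `L P₁ + L² ε = N`. A centre `c` and a subcode in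
which this holds for half of the `(L+1)`-subsets are found as follows: if most codewords are
correlated with few others, a counting argument applies; otherwise some codeword is correlated
with many others, and moving `c` towards it lowers the energy of all of them by `nε² / P₁`, which
can happen only a bounded number of times.
-/

open Finset MeasureTheory ProbabilityTheory Filter

noncomputable section

namespace Stmt3

/-- The law of the ambient i.i.d. `N(0,σ²)` noise vector `g̲ ∈ ℝⁿ`. -/
def gaussNoise (n : ℕ) (σ2 : ℝ) : Measure (Fin n → ℝ) :=
  Measure.pi fun _ => gaussianReal 0 σ2.toNNReal

/-- Average (over a uniform message pair) probability of list-decoding error of the Gaussian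
AVMAC code `(cx, cy, ψ)` under the state vector `s`, the receiver observing
`z̲ = x̲_m + y̲_w + s̲ + g̲`. -/
def gErrProb (n M W : ℕ) (σ2 : ℝ) (cx : Fin M → Fin n → ℝ) (cy : Fin W → Fin n → ℝ)
    (s : Fin n → ℝ) (ψ : (Fin n → ℝ) → Finset (Fin M × Fin W)) : ℝ :=
  (1 / ((M : ℝ) * (W : ℝ))) * ∑ m, ∑ w,
    ((gaussNoise n σ2) {g | (m, w) ∉ ψ (fun i => cx m i + cy w i + s i + g i)}).toReal

open scoped RealInnerProductSpace

theorem add_two_mul_add_one_mul_choose (m k : ℕ) :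
    (m + 2) * (m + 1) * m.choose k = (m + 2).choose (k + 2) * ((k + 2) * (k + 1)) := by
  have h₁ := Nat.add_one_mul_choose_eq m k
  have h₂ := Nat.add_one_mul_choose_eq (m + 1) (k + 1)
  calc (m + 2) * (m + 1) * m.choose k = (m + 1 + 1) * (m + 1).choose (k + 1) * (k + 1) := by
        rw [mul_assoc, h₁]; ring
    _ = _ := by rw [h₂]; ring

theorem choose_mul_le_two_mul_choose_succ {K k : ℕ} (hK : 2 * (k + 1) ≤ K) :
    (K.choose (k + 1) : ℝ) * K ≤ 2 * (k + 2) * K.choose (k + 2) := by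
  have h : (K.choose (k + 2) : ℝ) * (k + 2) = K.choose (k + 1) * (K - (k + 1) : ℕ) := by
    exact_mod_cast Nat.choose_succ_right_eq K (k + 1)
  have hsub : (K : ℝ) ≤ 2 * ((K - (k + 1) : ℕ) : ℝ) := by
    have hK' : (2 * (k + 1) : ℝ) ≤ K := by exact_mod_cast hK
    rw [Nat.cast_sub (by omega)]; push_cast; linarith
  nlinarith [Nat.cast_nonneg (α := ℝ) (K.choose (k + 1))]

section

variable {ι : Type*} [DecidableEq ι]

theorem card_filter_exists_rel_le (r : ι → ι → Prop) [DecidableRel r] (B : Finset ι) (k : ℕ) :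
    #{U ∈ B.powersetCard (k + 2) | ∃ i ∈ U, ∃ j ∈ U, i ≠ j ∧ r i j}
      ≤ ∑ j ∈ B, #{i ∈ B | i ≠ j ∧ r i j} * (#B - 2).choose k := by
  set subs := B.powersetCard (k + 2)
  calc _ ≤ #(B.biUnion fun j ↦
          {i ∈ B | i ≠ j ∧ r i j}.biUnion fun i ↦ {U ∈ subs | {i, j} ⊆ U}) := by
        refine card_le_card fun U hU ↦ ?_
        obtain ⟨hUsubs, i, hi, j, hj, hij, hr⟩ := mem_filter.mp hU
        have hUB := (mem_powersetCard.mp hUsubs).1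
        simp only [mem_biUnion, mem_filter]
        exact ⟨j, hUB hj, i, ⟨hUB hi, hij, hr⟩, hUsubs,
          insert_subset hi (singleton_subset_iff.mpr hj)⟩
    _ ≤ ∑ j ∈ B, ∑ i ∈ {i ∈ B | i ≠ j ∧ r i j}, #{U ∈ subs | {i, j} ⊆ U} :=
        card_biUnion_le.trans (sum_le_sum fun j _ ↦ card_biUnion_le)
    _ = _ := by
        refine sum_congr rfl fun j hj ↦ ?_
        rw [← smul_eq_mul, ← sum_const]
        refine sum_congr rfl fun i hi ↦ ?_
        obtain ⟨hiB, hij, -⟩ := mem_filter.mp hi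
        rw [card_filter_powersetCard_subset _ _ _ (insert_subset hiB (singleton_subset_iff.mpr hj))
          (by rw [card_pair hij]; omega), card_pair hij, Nat.add_sub_cancel]

theorem two_mul_card_filter_exists_rel_le (r : ι → ι → Prop) [DecidableRel r] (B : Finset ι)
    (k : ℕ) (D : ℝ) (hdeg : ∀ j ∈ B, (#{i ∈ B | i ≠ j ∧ r i j} : ℝ) ≤ D)
    (hB : 4 * (k + 2) * (k + 1) * D ≤ #B) :
    2 * (#{U ∈ B.powersetCard (k + 2) | ∃ i ∈ U, ∃ j ∈ U, i ≠ j ∧ r i j} : ℝ)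
      ≤ (#B).choose (k + 2) := by
  set bad := {U ∈ B.powersetCard (k + 2) | ∃ i ∈ U, ∃ j ∈ U, i ≠ j ∧ r i j}
  obtain hsmall | ⟨m, hm⟩ : #B < 2 ∨ ∃ m, #B = m + 2 :=
    (lt_or_ge (#B) 2).imp id fun h ↦ ⟨#B - 2, by omega⟩
  · have : bad = ∅ := by
      rw [← subset_empty, ← powersetCard_eq_empty.mpr (by omega : #B < k + 2)]
      exact filter_subset _ _
    simp [this]
  have hbad : (#bad : ℝ) ≤ (m + 2) * D * m.choose k := by
    calc _ ≤ ((∑ j ∈ B, #{i ∈ B | i ≠ j ∧ r i j} * (#B - 2).choose k : ℕ) : ℝ) := by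
          exact_mod_cast card_filter_exists_rel_le r B k
      _ ≤ ∑ j ∈ B, D * m.choose k := by
          push_cast
          rw [hm, Nat.add_sub_cancel]
          exact sum_le_sum fun j hj ↦ mul_le_mul_of_nonneg_right (hdeg j hj) (by positivity)
      _ = _ := by rw [sum_const, hm, nsmul_eq_mul]; push_cast; ring
  have hid : ((m : ℝ) + 2) * (m + 1) * m.choose k = (#B).choose (k + 2) * ((k + 2) * (k + 1)) := by
    rw [hm]; exact_mod_cast add_two_mul_add_one_mul_choose m k
  rw [hm] at hB
  push_cast at hB
  refine le_of_mul_le_mul_left ?_ (by positivity : (0 : ℝ) < 2 * ((k + 2) * (k + 1)))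
  calc 2 * ((k + 2) * (k + 1)) * (2 * #bad) = 4 * ((k + 2) * (k + 1)) * (#bad : ℝ) := by ring
    _ ≤ 4 * ((k + 2) * (k + 1)) * ((m + 2) * D * m.choose k) := by gcongr
    _ = 4 * (k + 2) * (k + 1) * D * ((m + 2) * m.choose k) := by ring
    _ ≤ (m + 2) * ((m + 2) * m.choose k) := mul_le_mul_of_nonneg_right hB (by positivity)
    _ ≤ 2 * (m + 1) * ((m + 2) * m.choose k) :=
        mul_le_mul_of_nonneg_right (by linarith) (by positivity)
    _ = 2 * ((m + 2) * (m + 1) * m.choose k) := by ring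
    _ = _ := by rw [hid]; ring

theorem choose_le_two_mul_card_filter_forall_not (r : ι → ι → Prop) [DecidableRel r]
    (B : Finset ι) (k : ℕ) (D : ℝ) (hdeg : ∀ j ∈ B, (#{i ∈ B | i ≠ j ∧ r i j} : ℝ) ≤ D)
    (hB : 4 * (k + 2) * (k + 1) * D ≤ #B) :
    ((#B).choose (k + 2) : ℝ) ≤
      2 * #{U ∈ B.powersetCard (k + 2) | ∀ i ∈ U, ∀ j ∈ U, i ≠ j → ¬ r i j} := by
  have hsplit := card_filter_add_card_filter_not (s := B.powersetCard (k + 2))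
    (fun U ↦ ∀ i ∈ U, ∀ j ∈ U, i ≠ j → ¬ r i j)
  simp only [not_forall, not_not, exists_prop, card_powersetCard] at hsplit
  have hsplitR : (#{U ∈ B.powersetCard (k + 2) | ∀ i ∈ U, ∀ j ∈ U, i ≠ j → ¬ r i j} : ℝ)
      + #{U ∈ B.powersetCard (k + 2) | ∃ i ∈ U, ∃ j ∈ U, i ≠ j ∧ r i j}
      = (#B).choose (k + 2) := by
    exact_mod_cast hsplit
  linarith [two_mul_card_filter_exists_rel_le r B k D hdeg hB]

theorem sum_sum_erase_le_sum_sum [Fintype ι]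
    {𝒰 𝒮 : Finset (Finset ι)} (f : Finset ι → ι → ℝ) (hf : ∀ S m, 0 ≤ f S m)
    (h𝒮 : ∀ U ∈ 𝒰, ∀ j ∈ U, U.erase j ∈ 𝒮) :
    ∑ U ∈ 𝒰, ∑ j ∈ U, f (U.erase j) j ≤ ∑ S ∈ 𝒮, ∑ m, f S m := by
  have hinj : Set.InjOn (fun p : (_ : Finset ι) × ι ↦ (p.1.erase p.2, p.2)) (𝒰.sigma id) := by
    rintro ⟨U, j⟩ hU ⟨U', j'⟩ hU' h
    simp only [coe_sigma, Set.mem_sigma_iff, id, mem_coe, Prod.mk.injEq] at hU hU' h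
    obtain ⟨hUU', rfl⟩ := h
    rw [← insert_erase hU.2, ← insert_erase hU'.2, hUU']
  calc ∑ U ∈ 𝒰, ∑ j ∈ U, f (U.erase j) j
        = ∑ q ∈ (𝒰.sigma id).image fun p ↦ (p.1.erase p.2, p.2), f q.1 q.2 := by
          rw [sum_image hinj, sum_sigma]; rfl
    _ ≤ ∑ q ∈ 𝒮 ×ˢ univ, f q.1 q.2 := by
          refine sum_le_sum_of_subset_of_nonneg (fun q hq ↦ ?_) fun q _ _ ↦ hf q.1 q.2
          obtain ⟨⟨U, j⟩, hUj, rfl⟩ := mem_image.mp hq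
          obtain ⟨hU, hj⟩ := mem_sigma.mp hUj
          exact mem_product.mpr ⟨h𝒮 U hU j hj, mem_univ _⟩
    _ = _ := sum_product _ _ _

variable {E : Type*} [NormedAddCommGroup E] [InnerProductSpace ℝ E]

theorem norm_sub_smul_sq_le {u d : E} {τ P : ℝ} (hτ : 0 < τ) (hud : τ < ⟪u, d⟫)
    (hd : ‖d‖ ^ 2 ≤ P) : ‖u - (τ / ‖d‖ ^ 2) • d‖ ^ 2 ≤ ‖u‖ ^ 2 - τ ^ 2 / P := by
  have hd₀ : 0 < ‖d‖ ^ 2 := by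
    refine pow_pos (norm_pos_iff.mpr fun h ↦ ?_) 2
    rw [h, inner_zero_right] at hud
    linarith
  rw [norm_sub_sq_real, real_inner_smul_right, norm_smul, mul_pow, Real.norm_eq_abs, sq_abs]
  have hcross : τ / ‖d‖ ^ 2 * τ ≤ τ / ‖d‖ ^ 2 * ⟪u, d⟫ := by gcongr
  have hP : τ ^ 2 / P ≤ τ ^ 2 / ‖d‖ ^ 2 := by gcongr
  have hsq : (τ / ‖d‖ ^ 2) ^ 2 * ‖d‖ ^ 2 = τ / ‖d‖ ^ 2 * τ := by field_simp
  have hlin : τ / ‖d‖ ^ 2 * τ = τ ^ 2 / ‖d‖ ^ 2 := by ring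
  linarith

theorem norm_sum_sq_le_of_inner_le {v : ι → E} {S : Finset ι} {P τ : ℝ} (hτ : 0 ≤ τ)
    (hv : ∀ i ∈ S, ‖v i‖ ^ 2 ≤ P) (hpair : ∀ i ∈ S, ∀ j ∈ S, i ≠ j → ⟪v i, v j⟫ ≤ τ) :
    ‖∑ i ∈ S, v i‖ ^ 2 ≤ #S * P + #S ^ 2 * τ := by
  have hrow : ∀ i ∈ S, ∑ j ∈ S, ⟪v i, v j⟫ ≤ P + #S * τ := by
    intro i hi
    rw [← add_sum_erase S _ hi, real_inner_self_eq_norm_sq]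
    have hcard : ((S.erase i).card : ℝ) ≤ #S := by exact_mod_cast card_erase_le
    have hrest : ∑ j ∈ S.erase i, ⟪v i, v j⟫ ≤ #(S.erase i) * τ := by
      rw [← nsmul_eq_mul, ← sum_const]
      exact sum_le_sum fun j hj ↦ hpair i hi j (mem_of_mem_erase hj) (ne_of_mem_erase hj).symm
    nlinarith [hv i hi]
  calc ‖∑ i ∈ S, v i‖ ^ 2 = ∑ i ∈ S, ∑ j ∈ S, ⟪v i, v j⟫ := by
        rw [← real_inner_self_eq_norm_sq, sum_inner]; simp only [inner_sum]
    _ ≤ ∑ _i ∈ S, (P + #S * τ) := sum_le_sum hrow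
    _ = _ := by rw [sum_const, nsmul_eq_mul]; ring

def lowCorrelationSubsets (x : ι → E) (c : E) (τ : ℝ) (k : ℕ) (B : Finset ι) :
    Finset (Finset ι) :=
  {U ∈ B.powersetCard k | ∀ i ∈ U, ∀ j ∈ U, i ≠ j → ⟪x i - c, x j - c⟫ ≤ τ}

theorem lowCorrelationSubsets_subset (x : ι → E) (c : E) (τ : ℝ) (k : ℕ) (B : Finset ι) :
    lowCorrelationSubsets x c τ k B ⊆ B.powersetCard k :=
  filter_subset _ _

theorem norm_sum_erase_sub_sq_le {x : ι → E} {c : E} {P τ : ℝ} {L : ℕ} {B U : Finset ι}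
    (hτ : 0 ≤ τ) (hB : ∀ i ∈ B, ‖x i - c‖ ^ 2 ≤ P) (hU : U ∈ lowCorrelationSubsets x c τ (L + 1) B)
    {j : ι} (hj : j ∈ U) :
    ‖∑ i ∈ U.erase j, x i - (L : ℝ) • c‖ ^ 2 ≤ L * P + L ^ 2 * τ := by
  unfold lowCorrelationSubsets at hU
  obtain ⟨hUB, hUcard⟩ := mem_powersetCard.mp (mem_filter.mp hU).1
  have hcard : #(U.erase j) = L := by rw [card_erase_of_mem hj, hUcard, Nat.add_sub_cancel]
  have hsum : ∑ i ∈ U.erase j, x i - (L : ℝ) • c = ∑ i ∈ U.erase j, (x i - c) := by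
    rw [sum_sub_distrib, sum_const, hcard, Nat.cast_smul_eq_nsmul]
  rw [hsum, ← hcard]
  exact norm_sum_sq_le_of_inner_le hτ (fun i hi ↦ hB i (hUB (mem_of_mem_erase hi)))
    fun i hi i' hi' ↦ (mem_filter.mp hU).2 i (mem_of_mem_erase hi) i' (mem_of_mem_erase hi')

def IsHalfLowCorrelated (x : ι → E) (c : E) (P τ : ℝ) (k : ℕ) (B : Finset ι) : Prop :=
  (∀ i ∈ B, ‖x i - c‖ ^ 2 ≤ P) ∧ ((#B).choose k : ℝ) ≤ 2 * #(lowCorrelationSubsets x c τ k B)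

theorem isHalfLowCorrelated_of_norm_sq_le {x : ι → E} {c : E} {P τ e : ℝ} {A : Finset ι} (k : ℕ)
    (hA : ∀ i ∈ A, ‖x i - c‖ ^ 2 ≤ e) (heP : e ≤ P) (heτ : e ≤ τ) :
    IsHalfLowCorrelated x c P τ k A := by
  have hall : lowCorrelationSubsets x c τ k A = A.powersetCard k := by
    refine filter_true_of_mem fun U hU i hi j hj _ ↦ ?_
    have hUA := (mem_powersetCard.mp hU).1
    have hi' := hA i (hUA hi)
    have hj' := hA j (hUA hj)
    have hCS := real_inner_le_norm (x i - c) (x j - c)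
    nlinarith [norm_nonneg (x i - c), norm_nonneg (x j - c),
      mul_nonneg (norm_nonneg (x i - c)) (norm_nonneg (x j - c))]
  refine ⟨fun i hi ↦ (hA i hi).trans heP, ?_⟩
  rw [hall, card_powersetCard]
  linarith [Nat.cast_nonneg (α := ℝ) ((#A).choose k)]

def correlationDegree (x : ι → E) (c : E) (τ : ℝ) (A : Finset ι) (i : ι) : ℕ :=
  #{i' ∈ A | i' ≠ i ∧ τ < ⟪x i' - c, x i - c⟫}

theorem isHalfLowCorrelated_filter_correlationDegree_le {x : ι → E} {c : E} {P τ : ℝ}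
    {A : Finset ι} (k : ℕ) (D : ℝ) (hA : ∀ i ∈ A, ‖x i - c‖ ^ 2 ≤ P)
    (hD : 4 * (k + 2) * (k + 1) * D ≤ #{i ∈ A | correlationDegree x c τ A i ≤ D}) :
    IsHalfLowCorrelated x c P τ (k + 2) {i ∈ A | correlationDegree x c τ A i ≤ D} := by
  refine ⟨fun i hi ↦ hA i (mem_of_mem_filter i hi), ?_⟩
  have h := choose_le_two_mul_card_filter_forall_not (fun i j ↦ τ < ⟪x i - c, x j - c⟫)
    {i ∈ A | correlationDegree x c τ A i ≤ D} k D
    (fun j hj ↦ le_trans ?_ (mem_filter.mp hj).2) hD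
  · simpa only [not_lt, lowCorrelationSubsets] using h
  · exact_mod_cast card_le_card (filter_subset_filter _ (filter_subset _ _))

/-- `A'` consists of the codewords correlated with `x i₀`, and `c'` is `c` moved towards `x i₀`. -/
theorem exists_subset_norm_sub_sq_le_sub {x : ι → E} {c : E} {A : Finset ι} {e P τ D : ℝ}
    (hτ : 0 < τ) (hA : ∀ i ∈ A, ‖x i - c‖ ^ 2 ≤ e) (heP : e ≤ P) {i₀ : ι} (hi₀ : i₀ ∈ A)
    (hdeg : D < correlationDegree x c τ A i₀) :
    ∃ A' ⊆ A, ∃ c' : E, D < #A' ∧ ∀ i ∈ A', ‖x i - c'‖ ^ 2 ≤ e - τ ^ 2 / P := by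
  set d := x i₀ - c
  refine ⟨{i ∈ A | i ≠ i₀ ∧ τ < ⟪x i - c, d⟫}, filter_subset _ _, c + (τ / ‖d‖ ^ 2) • d, hdeg,
    fun i hi ↦ ?_⟩
  obtain ⟨hiA, -, hid⟩ := mem_filter.mp hi
  rw [← sub_sub]
  exact (norm_sub_smul_sq_le hτ hid ((hA i₀ hi₀).trans heP)).trans (by linarith [hA i hiA])

theorem exists_subset_isHalfLowCorrelated (x : ι → E) (k : ℕ) {P τ : ℝ} (hP : 0 < P)
    (hτ : 0 < τ) (j : ℕ) (A : Finset ι) (c : E) (e : ℝ) (hA : ∀ i ∈ A, ‖x i - c‖ ^ 2 ≤ e)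
    (heP : e ≤ P) (he : e ≤ τ + j * (τ ^ 2 / P)) :
    ∃ B ⊆ A, ∃ c' : E, (1 / (8 * (k + 2) * (k + 1) : ℝ)) ^ j * #A ≤ #B ∧
      IsHalfLowCorrelated x c' P τ (k + 2) B := by
  set δ : ℝ := 1 / (8 * (k + 2) * (k + 1))
  have hδ₀ : 0 ≤ δ := by positivity
  have hδ₁ : δ ≤ 1 / 2 := by
    rw [div_le_div_iff₀ (by positivity) two_pos]; nlinarith
  induction j generalizing A c e with
  | zero =>
    exact ⟨A, subset_rfl, c, by simp,
      isHalfLowCorrelated_of_norm_sq_le _ hA heP (by simpa using he)⟩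
  | succ j ih =>
    have hδpow : δ ^ (j + 1) ≤ 1 / 2 :=
      (pow_le_pow_of_le_one hδ₀ (by linarith) (by omega : 1 ≤ j + 1)).trans (by simpa using hδ₁)
    have hA₀ : (0 : ℝ) ≤ #A := by positivity
    by_cases heτ : e ≤ τ
    · exact ⟨A, subset_rfl, c, by nlinarith, isHalfLowCorrelated_of_norm_sq_le _ hA heP heτ⟩
    set Alow := {i ∈ A | correlationDegree x c τ A i ≤ δ * #A}
    by_cases hlow : (#A : ℝ) ≤ 2 * #Alow
    · have hδA : 4 * (k + 2) * (k + 1) * (δ * #A) = #A / 2 := by simp only [δ]; field_simp; ring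
      exact ⟨Alow, filter_subset _ _, c, by nlinarith,
        isHalfLowCorrelated_filter_correlationDegree_le k _ (fun i hi ↦ (hA i hi).trans heP)
          (by rw [hδA]; linarith)⟩
    obtain ⟨i₀, hi₀⟩ : (A \ Alow).Nonempty := by
      rw [nonempty_iff_ne_empty, Ne, sdiff_eq_empty_iff_subset]
      intro h
      have : (#A : ℝ) ≤ #Alow := by exact_mod_cast card_le_card h
      linarith [Nat.cast_nonneg (α := ℝ) (#Alow)]
    obtain ⟨hi₀A, hi₀low⟩ := mem_sdiff.mp hi₀
    obtain ⟨A', hA'A, c', hA'card, hA'⟩ :=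
      exists_subset_norm_sub_sq_le_sub hτ hA heP hi₀A (by simpa [Alow, hi₀A] using hi₀low)
    obtain ⟨B, hBA', c'', hB, hgood⟩ := ih A' c' (e - τ ^ 2 / P) hA'
      (by linarith [div_pos (pow_pos hτ 2) hP]) (by push_cast at he; linarith)
    refine ⟨B, hBA'.trans hA'A, c'', ?_, hgood⟩
    calc δ ^ (j + 1) * #A = δ ^ j * (δ * #A) := by ring
      _ ≤ δ ^ j * #A' := by gcongr
      _ ≤ #B := hB

end

theorem one_le_sum_measureReal_notMem {Ω β : Type*} [MeasurableSpace Ω] (μ : Measure Ω)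
    [IsProbabilityMeasure μ] {L : ℕ} (φ : Ω → Finset β) (hφ : ∀ ω, #(φ ω) ≤ L) (T : Finset β)
    (hT : L < #T) : 1 ≤ ∑ b ∈ T, μ.real {ω | b ∉ φ ω} := by
  have hcover : ⋃ b ∈ T, {ω | b ∉ φ ω} = Set.univ := by
    refine Set.eq_univ_of_forall fun ω ↦ ?_
    obtain ⟨b, hbT, hb⟩ := not_subset.mp fun h ↦ (card_le_card h).not_gt ((hφ ω).trans_lt hT)
    exact Set.mem_biUnion hbT hb
  calc (1 : ℝ) = μ.real (⋃ b ∈ T, {ω | b ∉ φ ω}) := by rw [hcover, probReal_univ]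
    _ ≤ _ := measureReal_biUnion_finset_le _ _

instance isProbabilityMeasure_gaussNoise (n : ℕ) (σ2 : ℝ) :
    IsProbabilityMeasure (gaussNoise n σ2) := by
  unfold gaussNoise; infer_instance

theorem card_div_le_sum_gErrProb {n M W L : ℕ} (σ2 : ℝ) (cx : Fin M → Fin n → ℝ)
    (cy : Fin W → Fin n → ℝ) (ψ : (Fin n → ℝ) → Finset (Fin M × Fin W))
    (hψ : ∀ z, #(ψ z) ≤ L) (hW : 0 < W) (v : Fin n → ℝ) {𝒰 𝒮 : Finset (Finset (Fin M))}
    (h𝒰 : ∀ U ∈ 𝒰, #U = L + 1) (h𝒮 : ∀ U ∈ 𝒰, ∀ j ∈ U, U.erase j ∈ 𝒮) :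
    (#𝒰 : ℝ) / M ≤ ∑ S ∈ 𝒮, gErrProb n M W σ2 cx cy (∑ m ∈ S, cx m - v) ψ := by
  set μ := gaussNoise n σ2
  set err : Finset (Fin M) → Fin M → Fin W → ℝ := fun S m w ↦
    μ.real {g | (m, w) ∉ ψ (fun i ↦ cx m i + cy w i + (∑ m' ∈ S, cx m' - v) i + g i)}
  -- the received word does not depend on which member of `U` is the transmitted one
  have hconf : ∀ U ∈ 𝒰, ∀ w, 1 ≤ ∑ j ∈ U, err (U.erase j) j w := by
    intro U hU w
    have hz : ∀ j ∈ U, ∀ g : Fin n → ℝ,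
        (fun i ↦ cx j i + cy w i + (∑ m ∈ U.erase j, cx m - v) i + g i)
          = fun i ↦ (∑ m ∈ U, cx m - v) i + cy w i + g i := by
      intro j hj g
      funext i
      simp only [Pi.sub_apply, Finset.sum_apply]
      rw [← add_sum_erase U (fun m ↦ cx m i) hj]
      ring
    calc (1 : ℝ) ≤ ∑ p ∈ U.image (·, w),
          μ.real {g | p ∉ ψ fun i ↦ (∑ m ∈ U, cx m - v) i + cy w i + g i} :=
          one_le_sum_measureReal_notMem μ _ (fun g ↦ hψ _) _ (by
            rw [card_image_of_injective _ fun a b h ↦ (Prod.mk.inj h).1, h𝒰 U hU]; omega)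
      _ = _ := by
          rw [sum_image fun a _ b _ h ↦ (Prod.mk.inj h).1]
          exact sum_congr rfl fun j hj ↦ by simp only [err, hz j hj]
  have hW' : (W : ℝ) ≠ 0 := by positivity
  calc (#𝒰 : ℝ) / M = 1 / (M * W) * ∑ _U ∈ 𝒰, ∑ _w : Fin W, (1 : ℝ) := by
        simp only [sum_const, card_univ, Fintype.card_fin, nsmul_eq_mul, mul_one]
        rw [one_div_mul_eq_div, mul_div_mul_right _ _ hW']
    _ ≤ 1 / (M * W) * ∑ U ∈ 𝒰, ∑ j ∈ U, ∑ w, err (U.erase j) j w := by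
        gcongr with U hU
        rw [sum_comm]
        exact sum_le_sum fun w _ ↦ hconf U hU w
    _ ≤ 1 / (M * W) * ∑ S ∈ 𝒮, ∑ m, ∑ w, err S m w := by
        gcongr
        exact sum_sum_erase_le_sum_sum (fun S m ↦ ∑ w, err S m w)
          (fun S m ↦ sum_nonneg fun w _ ↦ measureReal_nonneg) h𝒮
    _ = _ := by rw [mul_sum]; rfl

def confusableSets {n M : ℕ} (cx : Fin M → Fin n → ℝ) (v : Fin n → ℝ) (N : ℝ) (L : ℕ)
    (B : Finset (Fin M)) : Finset (Finset (Fin M)) :=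
  {U ∈ B.powersetCard (L + 1) | ∀ j ∈ U, ∑ i, (∑ m ∈ U.erase j, cx m - v) i ^ 2 ≤ N}

theorem exists_subcode_choose_le_two_mul_card_confusableSets {n M k : ℕ}
    (cx : Fin M → Fin n → ℝ) {P N τ : ℝ} {j : ℕ} (hP : 0 < P) (hτ : 0 < τ)
    (hN : (k + 1) * P + (k + 1) ^ 2 * τ ≤ N) (hj : (P / τ) ^ 2 ≤ j)
    (hpow : ∀ m, ∑ i, cx m i ^ 2 ≤ P) :
    ∃ B : Finset (Fin M), ∃ v : Fin n → ℝ, (1 / (8 * (k + 2) * (k + 1) : ℝ)) ^ j * M ≤ #B ∧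
      ((#B).choose (k + 2) : ℝ) ≤ 2 * #(confusableSets cx v N (k + 1) B) := by
  set x : Fin M → EuclideanSpace ℝ (Fin n) := fun m ↦ WithLp.toLp 2 (cx m)
  have hstart : P ≤ τ + j * (τ ^ 2 / P) := by
    calc P = (P / τ) ^ 2 * (τ ^ 2 / P) := by field_simp
      _ ≤ j * (τ ^ 2 / P) := by gcongr
      _ ≤ τ + j * (τ ^ 2 / P) := le_add_of_nonneg_left hτ.le
  obtain ⟨B, -, c, hB, hball, hhalf⟩ := exists_subset_isHalfLowCorrelated x k hP hτ j univ 0 P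
    (fun m _ ↦ by simpa [x, EuclideanSpace.real_norm_sq_eq] using hpow m) le_rfl hstart
  set v := WithLp.ofLp (((k + 1 : ℕ) : ℝ) • c)
  have hsub : lowCorrelationSubsets x c τ (k + 2) B ⊆ confusableSets cx v N (k + 1) B := by
    intro U hU
    refine mem_filter.mpr ⟨lowCorrelationSubsets_subset x c τ (k + 2) B hU, fun i hi ↦ ?_⟩
    have hjam : ∑ m ∈ U.erase i, cx m - v
        = WithLp.ofLp (∑ m ∈ U.erase i, x m - ((k + 1 : ℕ) : ℝ) • c) := by
      simp [x, v]
    rw [hjam, ← EuclideanSpace.real_norm_sq_eq]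
    exact (norm_sum_erase_sub_sq_le hτ.le hball hU hi).trans (by push_cast; exact hN)
  refine ⟨B, v, by simpa using hB, hhalf.trans ?_⟩
  gcongr

theorem exists_state_le_gErrProb {n M W k : ℕ} (σ2 : ℝ) (cx : Fin M → Fin n → ℝ)
    (cy : Fin W → Fin n → ℝ) (ψ : (Fin n → ℝ) → Finset (Fin M × Fin W))
    (hψ : ∀ z, #(ψ z) ≤ k + 1) (hW : 0 < W) {N ρ : ℝ} {v : Fin n → ℝ} {B : Finset (Fin M)}
    (hBρ : ρ * M ≤ #B) (hB : 2 * (k + 1) ≤ #B)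
    (hhalf : ((#B).choose (k + 2) : ℝ) ≤ 2 * #(confusableSets cx v N (k + 1) B)) :
    ∃ s : Fin n → ℝ, ∑ i, s i ^ 2 ≤ N ∧ ρ / (4 * (k + 2)) ≤ gErrProb n M W σ2 cx cy s ψ := by
  set 𝒰 := confusableSets cx v N (k + 1) B
  set 𝒮 := {S ∈ B.powersetCard (k + 1) | ∑ i, (∑ m ∈ S, cx m - v) i ^ 2 ≤ N}
  have h𝒰 : ∀ U ∈ 𝒰, U ⊆ B ∧ #U = k + 2 := fun U hU ↦ mem_powersetCard.mp (mem_filter.mp hU).1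
  have h𝒮 : ∀ U ∈ 𝒰, ∀ i ∈ U, U.erase i ∈ 𝒮 := fun U hU i hi ↦
    mem_filter.mpr ⟨mem_powersetCard.mpr ⟨(erase_subset _ _).trans (h𝒰 U hU).1,
      by rw [card_erase_of_mem hi, (h𝒰 U hU).2]; rfl⟩, (mem_filter.mp hU).2 i hi⟩
  have hM : (0 : ℝ) < M := by
    have := (card_le_univ B).trans_eq (Fintype.card_fin M)
    exact_mod_cast (by omega : 0 < M)
  have hcount : (#𝒮 : ℝ) * (ρ / (4 * (k + 2))) ≤ #𝒰 / M := by
    have h𝒮card : (#𝒮 : ℝ) ≤ (#B).choose (k + 1) := by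
      exact_mod_cast (card_le_card (filter_subset _ _)).trans_eq (card_powersetCard _ _)
    rw [le_div_iff₀ hM]
    calc (#𝒮 : ℝ) * (ρ / (4 * (k + 2))) * M = #𝒮 * (ρ * M) / (4 * (k + 2)) := by ring
      _ ≤ (#B).choose (k + 1) * #B / (4 * (k + 2)) := by
          gcongr ?_ / _
          exact (mul_le_mul_of_nonneg_left hBρ (by positivity)).trans
            (mul_le_mul_of_nonneg_right h𝒮card (by positivity))
      _ ≤ 2 * (k + 2) * (#B).choose (k + 2) / (4 * (k + 2)) := by
          gcongr ?_ / _; exact choose_mul_le_two_mul_choose_succ hB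
      _ ≤ #𝒰 := by
          rw [div_le_iff₀ (by positivity)]; nlinarith [hhalf]
  have h𝒮ne : 𝒮.Nonempty := by
    obtain ⟨U, hU⟩ : 𝒰.Nonempty := by
      have hpos : (0 : ℝ) < (#B).choose (k + 2) := by exact_mod_cast Nat.choose_pos (by omega)
      rw [← card_pos, ← Nat.cast_pos (α := ℝ)]
      linarith
    obtain ⟨i, hi⟩ := card_pos.mp (by rw [(h𝒰 U hU).2]; omega)
    exact ⟨_, h𝒮 U hU i hi⟩
  have hsum : ∑ _S ∈ 𝒮, ρ / (4 * (k + 2))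
      ≤ ∑ S ∈ 𝒮, gErrProb n M W σ2 cx cy (∑ m ∈ S, cx m - v) ψ := by
    rw [sum_const, nsmul_eq_mul]
    exact hcount.trans (card_div_le_sum_gErrProb σ2 cx cy ψ hψ hW v (fun U hU ↦ (h𝒰 U hU).2) h𝒮)
  obtain ⟨S, hS, hSerr⟩ := exists_le_of_sum_le h𝒮ne hsum
  exact ⟨_, (mem_filter.mp hS).2, hSerr⟩

theorem gaussian_avmac_list_decoding_converse_zero_rate_general
    (L : ℕ) (hL : 1 ≤ L) (P₁ N σ2 : ℝ)
    (hP₁ : 0 < P₁)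
    (h₁ : (L : ℝ) * P₁ < N)
    (M W : ℕ → ℕ)
    (cx : ∀ n, Fin (M n) → Fin n → ℝ) (cy : ∀ n, Fin (W n) → Fin n → ℝ)
    (ψ : ∀ n, (Fin n → ℝ) → Finset (Fin (M n) × Fin (W n)))
    (hpow₁ : ∀ n m, ∑ i, (cx n m i) ^ 2 ≤ (n : ℝ) * P₁)
    (hlist : ∀ n z, (ψ n z).card ≤ L)
    (hM : Tendsto M atTop atTop) (hW : Tendsto W atTop atTop) :
    ∃ c > (0 : ℝ), ∃ n₀ : ℕ, ∀ n ≥ n₀,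
      ∃ s : Fin n → ℝ, ∑ i, (s i) ^ 2 ≤ (n : ℝ) * N ∧
        c ≤ gErrProb n (M n) (W n) σ2 (cx n) (cy n) s (ψ n) := by
  obtain ⟨k, rfl⟩ : ∃ k, L = k + 1 := ⟨L - 1, by omega⟩
  push_cast at h₁
  set ε := (N - (k + 1) * P₁) / (k + 1) ^ 2
  have hε : 0 < ε := div_pos (by linarith) (by positivity)
  have hεN : (k + 1 : ℝ) ^ 2 * ε = N - (k + 1) * P₁ := mul_div_cancel₀ _ (by positivity)
  set j := ⌈(P₁ / ε) ^ 2⌉₊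
  set ρ := (1 / (8 * (k + 2) * (k + 1) : ℝ)) ^ j
  have hρ : 0 < ρ := by positivity
  obtain ⟨n₁, hn₁⟩ := eventually_atTop.mp (hM.eventually_ge_atTop ⌈2 * (k + 1) / ρ⌉₊)
  obtain ⟨n₂, hn₂⟩ := eventually_atTop.mp (hW.eventually_ge_atTop 1)
  refine ⟨ρ / (4 * (k + 2)), by positivity, max (max n₁ n₂) 1, fun n hn ↦ ?_⟩
  simp only [ge_iff_le, max_le_iff] at hn
  have hn₀ : (0 : ℝ) < n := by exact_mod_cast hn.2
  have hMn : 2 * (k + 1) ≤ ρ * M n := by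
    have h := (Nat.le_ceil _).trans (Nat.cast_le.mpr (hn₁ n hn.1.1))
    rw [div_le_iff₀ hρ] at h; linarith
  obtain ⟨B, v, hBρ, hhalf⟩ := exists_subcode_choose_le_two_mul_card_confusableSets (cx n)
    (τ := n * ε) (N := n * N) (j := j) (by positivity) (by positivity) (by nlinarith)
    (by rw [mul_div_mul_left _ _ hn₀.ne']; exact Nat.le_ceil _) (hpow₁ n)
  exact exists_state_le_gErrProb σ2 (cx n) (cy n) (ψ n) (hlist n) (hn₂ n hn.1.2) hBρ
    (by exact_mod_cast hMn.trans hBρ) hhalf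

/-- **zero-rate converse for the oblivious Gaussian AVMAC.** If `L·P₁ < N` and
`L·P₂ < N`, then for every sequence of `L`-list codes of blocklength `n` with message-set
sizes `M_n → ∞` and `W_n → ∞`, the average probability of error against the worst admissible
jammer is bounded away from `0` along the sequence: there are `c > 0` and `n₀` such that for
every `n ≥ n₀` some admissible state vector `s̲` (with `‖s̲‖² ≤ nN`) forces average error at
least `c`. Hence no rate pair with both components positive is achievable and the
`L`-list-decoding capacity region is `{(0,0)}`. -/
theorem gaussian_avmac_list_decoding_converse_zero_rate
    (L : ℕ) (hL : 1 ≤ L) (P₁ P₂ N σ2 : ℝ)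
    (hP₁ : 0 < P₁) (hP₂ : 0 < P₂) (hN : 0 < N) (hσ2 : 0 < σ2)
    (h₁ : (L : ℝ) * P₁ < N) (h₂ : (L : ℝ) * P₂ < N)
    (M W : ℕ → ℕ)
    (cx : ∀ n, Fin (M n) → Fin n → ℝ) (cy : ∀ n, Fin (W n) → Fin n → ℝ)
    (ψ : ∀ n, (Fin n → ℝ) → Finset (Fin (M n) × Fin (W n)))
    (hpow₁ : ∀ n m, ∑ i, (cx n m i) ^ 2 ≤ (n : ℝ) * P₁)
    (hpow₂ : ∀ n w, ∑ i, (cy n w i) ^ 2 ≤ (n : ℝ) * P₂)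
    (hlist : ∀ n z, (ψ n z).card ≤ L)
    (hM : Tendsto M atTop atTop) (hW : Tendsto W atTop atTop) :
    ∃ c > (0 : ℝ), ∃ n₀ : ℕ, ∀ n ≥ n₀,
      ∃ s : Fin n → ℝ, ∑ i, (s i) ^ 2 ≤ (n : ℝ) * N ∧
        c ≤ gErrProb n (M n) (W n) σ2 (cx n) (cy n) s (ψ n) :=
  gaussian_avmac_list_decoding_converse_zero_rate_general L hL P₁ N σ2 hP₁ h₁ M W cx cy ψ hpow₁
    hlist hM hW

end Stmt3
end
end

section
/- Let 𝒰, 𝒳, 𝒴 be finite sets and I, J ≥ 2 integers. Let Q be a conditional distribution assigning to each u ∈ 𝒰 a probability distribution Q(·|u) on 𝒳^{I−1}×𝒴^{J−1}, and let P₁, P₂ be conditional distributions assigning to each u probability distributions P₁(·|u) on 𝒳 and P₂(·|u) on 𝒴. Suppose that for every u ∈ 𝒰, every pair of distinct indices (i,j) ≠ (i',j') in [I]×[J], and every x^I ∈ 𝒳^I and y^J ∈ 𝒴^J: Q(x^{I∖i}, y^{J∖j} | u)·P₁(x_i|u)·P₂(y_j|u) = Q(x^{I∖i'}, y^{J∖j'}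 | u)·P₁(x_{i'}|u)·P₂(y_{j'}|u). Then for every u, every (i,j) ∈ [I]×[J], and every x^I, y^J: Q(x^{I∖i}, y^{J∖j} | u)·P₁(x_i|u)·P₂(y_j|u) = Π_{k=1}^{I} P₁(x_k|u) · Π_{l=1}^{J} P₂(y_l|u); in particular Q(·|u) is the product distribution P₁(·|u)^{⊗(I−1)} ⊗ P₂(·|u)^{⊗(J−1)}. -/
open Finset

private lemma removeNth_cons_succ {n : ℕ} {X : Type*} (m : Fin (n + 1)) (a : X)
    (xs : Fin (n + 1) → X) :
    Fin.removeNth (α := fun _ => X) m.succ (Fin.cons a xs)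
      = Fin.cons a (Fin.removeNth (α := fun _ => X) m xs) := by
  funext k
  induction k using Fin.cases with
  | zero => simp [Fin.removeNth, Fin.succ_succAbove_zero]
  | succ k => simp [Fin.removeNth, Fin.succ_succAbove_succ]

private lemma sum_prod_pi {X : Type*} [Fintype X] (g : X → ℝ) :
    ∀ n : ℕ, ∑ zs : Fin n → X, ∏ k, g (zs k) = (∑ a, g a) ^ n := by
  intro n
  induction n with
  | zero => simp
  | succ n ih =>
    rw [← Equiv.sum_comp (Fin.consEquiv (fun _ => X)) (fun zs => ∏ k, g (zs k)), Fintype.sum_prod_type]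
    simp only [Fin.consEquiv_apply, Fin.prod_univ_succ, Fin.cons_zero, Fin.cons_succ]
    simp only [← Finset.mul_sum]
    rw [← Finset.sum_mul, ih, pow_succ']

private lemma const_of_shift {X : Type*} [Fintype X] (p : X → ℝ) (hp : ∑ a, p a = 1) :
    ∀ (n : ℕ) (f : (Fin (n + 1) → X) → ℝ),
      (∀ (m : Fin (n + 1)) (xs : Fin (n + 1) → X),
        f xs = (∑ a, f (Fin.cons a (m.removeNth xs))) * p (xs m)) →
      ∀ xs, f xs = (∑ zs, f zs) * ∏ k, p (xs k) := by
  intro n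
  induction n with
  | zero =>
    intro f hf xs
    rw [hf 0 xs, Fin.prod_univ_one]
    congr 1
    refine Fintype.sum_equiv (Equiv.funUnique (Fin 1) X).symm
      (fun a => f (Fin.cons a (Fin.removeNth 0 xs))) f (fun a => ?_)
    exact congrArg f (funext fun k => by rw [Fin.eq_zero k]; simp [Equiv.funUnique])
  | succ n ih =>
    intro f hf xs
    set g : (Fin (n + 1) → X) → ℝ := fun zs => ∑ a, f (Fin.cons a zs) with hg
    have hgshift : ∀ (m : Fin (n + 1)) (zs : Fin (n + 1) → X),
        g zs = (∑ a, g (Fin.cons a (m.removeNth zs))) * p (zs m) := by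
      intro m zs
      have step : ∀ a : X, f (Fin.cons a zs)
          = (∑ a', f (Fin.cons a' (Fin.cons a (m.removeNth zs)))) * p (zs m) := by
        intro a
        have h := hf m.succ (Fin.cons a zs)
        rwa [removeNth_cons_succ, Fin.cons_succ] at h
      calc g zs = ∑ a, (∑ a', f (Fin.cons a' (Fin.cons a (m.removeNth zs)))) * p (zs m) :=
            Finset.sum_congr rfl (fun a _ => step a)
        _ = (∑ a, g (Fin.cons a (m.removeNth zs))) * p (zs m) := by
            rw [← Finset.sum_mul]
    have hgsum : ∑ zs : Fin (n + 1) → X, g zs = ∑ ws : Fin (n + 2) → X, f ws := by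
      rw [← Equiv.sum_comp (Fin.consEquiv (fun _ => X)) f, Fintype.sum_prod_type]
      rw [Finset.sum_comm]
      rfl
    have h0 := hf 0 xs
    have hgval := ih g hgshift (Fin.removeNth 0 xs)
    rw [hgsum] at hgval
    have : (∑ a, f (Fin.cons a (Fin.removeNth 0 xs))) = g (Fin.removeNth 0 xs) := rfl
    rw [this, hgval] at h0
    rw [h0, Fin.prod_univ_succ (fun k => p (xs k))]
    have hr : ∀ k : Fin (n + 1), Fin.removeNth 0 xs k = xs k.succ := by
      intro k; rw [Fin.removeNth_zero]; rfl
    simp only [hr]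
    ring

/-- If the "true pair + symmetrized rest" distribution
`Q(x^{I∖i}, y^{J∖j} | u) · P₁(x_i|u) · P₂(y_j|u)` does not depend on the choice of the pair
`(i,j) ∈ [I]×[J]` (for `I, J ≥ 2`, here `I = I' + 2`, `J = J' + 2`), then it equals the full
product distribution `Π_k P₁(x_k|u) · Π_l P₂(y_l|u)`; in particular `Q(·|u)` is the product
distribution `P₁(·|u)^{⊗(I−1)} ⊗ P₂(·|u)^{⊗(J−1)}`. -/
theorem symmetrizing_distribution_is_product
    {U X Y : Type*} [Fintype U] [Fintype X] [Fintype Y]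
    (I' J' : ℕ)
    (Q : U → (Fin (I' + 1) → X) → (Fin (J' + 1) → Y) → ℝ)
    (P₁ : U → X → ℝ) (P₂ : U → Y → ℝ)
    (hQ0 : ∀ u xs ys, 0 ≤ Q u xs ys)
    (hQ1 : ∀ u, ∑ xs : Fin (I' + 1) → X, ∑ ys : Fin (J' + 1) → Y, Q u xs ys = 1)
    (hP₁0 : ∀ u a, 0 ≤ P₁ u a) (hP₁1 : ∀ u, ∑ a, P₁ u a = 1)
    (hP₂0 : ∀ u b, 0 ≤ P₂ u b) (hP₂1 : ∀ u, ∑ b, P₂ u b = 1)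
    (hyp : ∀ (u : U) (i i' : Fin (I' + 2)) (j j' : Fin (J' + 2)), (i, j) ≠ (i', j') →
      ∀ (x : Fin (I' + 2) → X) (y : Fin (J' + 2) → Y),
        Q u (i.removeNth x) (j.removeNth y) * P₁ u (x i) * P₂ u (y j)
          = Q u (i'.removeNth x) (j'.removeNth y) * P₁ u (x i') * P₂ u (y j')) :
    (∀ (u : U) (i : Fin (I' + 2)) (j : Fin (J' + 2)) (x : Fin (I' + 2) → X)
        (y : Fin (J' + 2) → Y),
        Q u (i.removeNth x) (j.removeNth y) * P₁ u (x i) * P₂ u (y j)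
          = (∏ k, P₁ u (x k)) * ∏ l, P₂ u (y l)) ∧
    (∀ (u : U) (xs : Fin (I' + 1) → X) (ys : Fin (J' + 1) → Y),
        Q u xs ys = (∏ k, P₁ u (xs k)) * ∏ l, P₂ u (ys l)) := by
  have e₁ : ∀ (u : U) (c : ℝ), ∑ a, c * P₁ u a = c := by
    intro u c; rw [← Finset.mul_sum, hP₁1, mul_one]
  have e₂ : ∀ (u : U) (c : ℝ), ∑ b, c * P₂ u b = c := by
    intro u c; rw [← Finset.mul_sum, hP₂1, mul_one]
  -- key1 : Q u · ys is proportional to the product of P₁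
  have key1 : ∀ (u : U) (ys : Fin (J' + 1) → Y) (xs : Fin (I' + 1) → X),
      Q u xs ys = (∑ zs, Q u zs ys) * ∏ k, P₁ u (xs k) := by
    intro u ys
    refine const_of_shift (P₁ u) (hP₁1 u) I' (fun xs => Q u xs ys) ?_
    intro m xs
    have ha : ∀ a : X, Q u xs ys * P₁ u a
        = Q u (Fin.cons a (m.removeNth xs)) ys * P₁ u (xs m) := by
      intro a
      have hab : ∀ b : Y, Q u xs ys * P₁ u a * P₂ u b
          = Q u (Fin.cons a (m.removeNth xs)) ys * P₁ u (xs m) * P₂ u b := by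
        intro b
        have h := hyp u 0 m.succ 0 0
          (fun h => Fin.succ_ne_zero m (congrArg Prod.fst h).symm)
          (Fin.cons a xs) (Fin.cons b ys)
        simp only [Fin.removeNth_zero, Fin.tail_cons, removeNth_cons_succ,
          Fin.cons_zero, Fin.cons_succ] at h
        exact h
      calc Q u xs ys * P₁ u a = ∑ b, Q u xs ys * P₁ u a * P₂ u b := (e₂ u _).symm
        _ = ∑ b, Q u (Fin.cons a (m.removeNth xs)) ys * P₁ u (xs m) * P₂ u b :=
            Finset.sum_congr rfl (fun b _ => hab b)
        _ = _ := e₂ u _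
    calc Q u xs ys = ∑ a, Q u xs ys * P₁ u a := (e₁ u _).symm
      _ = ∑ a, Q u (Fin.cons a (m.removeNth xs)) ys * P₁ u (xs m) :=
          Finset.sum_congr rfl (fun a _ => ha a)
      _ = (∑ a, Q u (Fin.cons a (m.removeNth xs)) ys) * P₁ u (xs m) := by
          rw [← Finset.sum_mul]
  -- key2 : Q u xs · is proportional to the product of P₂
  have key2 : ∀ (u : U) (xs : Fin (I' + 1) → X) (ys : Fin (J' + 1) → Y),
      Q u xs ys = (∑ ws, Q u xs ws) * ∏ l, P₂ u (ys l) := by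
    intro u xs
    refine const_of_shift (P₂ u) (hP₂1 u) J' (fun ys => Q u xs ys) ?_
    intro l ys
    have hb : ∀ b : Y, Q u xs ys * P₂ u b
        = Q u xs (Fin.cons b (l.removeNth ys)) * P₂ u (ys l) := by
      intro b
      have hab : ∀ a : X, Q u xs ys * P₂ u b * P₁ u a
          = Q u xs (Fin.cons b (l.removeNth ys)) * P₂ u (ys l) * P₁ u a := by
        intro a
        have h := hyp u 0 0 0 l.succ
          (fun h => Fin.succ_ne_zero l (congrArg Prod.snd h).symm)
          (Fin.cons a xs) (Fin.cons b ys)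
        simp only [Fin.removeNth_zero, Fin.tail_cons, removeNth_cons_succ,
          Fin.cons_zero, Fin.cons_succ] at h
        calc Q u xs ys * P₂ u b * P₁ u a = Q u xs ys * P₁ u a * P₂ u b := by ring
          _ = Q u xs (Fin.cons b (l.removeNth ys)) * P₁ u a * P₂ u (ys l) := h
          _ = Q u xs (Fin.cons b (l.removeNth ys)) * P₂ u (ys l) * P₁ u a := by ring
      calc Q u xs ys * P₂ u b = ∑ a, Q u xs ys * P₂ u b * P₁ u a := (e₁ u _).symm
        _ = ∑ a, Q u xs (Fin.cons b (l.removeNth ys)) * P₂ u (ys l) * P₁ u a :=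
            Finset.sum_congr rfl (fun a _ => hab a)
        _ = _ := e₁ u _
    calc Q u xs ys = ∑ b, Q u xs ys * P₂ u b := (e₂ u _).symm
      _ = ∑ b, Q u xs (Fin.cons b (l.removeNth ys)) * P₂ u (ys l) :=
          Finset.sum_congr rfl (fun b _ => hb b)
      _ = (∑ b, Q u xs (Fin.cons b (l.removeNth ys))) * P₂ u (ys l) := by
          rw [← Finset.sum_mul]
  -- the x-marginal equals the product of P₁
  have hd : ∀ (u : U) (xs : Fin (I' + 1) → X),
      ∑ ws, Q u xs ws = ∏ k, P₁ u (xs k) := by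
    intro u xs
    have h1 : ∑ ys' : Fin (J' + 1) → Y, (∑ zs, Q u zs ys') * ∏ k, P₁ u (xs k)
        = ∑ ys' : Fin (J' + 1) → Y, (∑ ws, Q u xs ws) * ∏ l, P₂ u (ys' l) :=
      Finset.sum_congr rfl (fun ys' _ => by rw [← key1 u ys' xs, key2 u xs ys'])
    rw [← Finset.sum_mul, Finset.sum_comm, hQ1 u, one_mul, ← Finset.mul_sum,
      sum_prod_pi (P₂ u) (J' + 1), hP₂1, one_pow, mul_one] at h1
    exact h1.symm
  have main2 : ∀ (u : U) (xs : Fin (I' + 1) → X) (ys : Fin (J' + 1) → Y),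
      Q u xs ys = (∏ k, P₁ u (xs k)) * ∏ l, P₂ u (ys l) := by
    intro u xs ys
    rw [key2 u xs ys, hd u xs]
  refine ⟨?_, main2⟩
  intro u i j x y
  rw [main2 u (i.removeNth x) (j.removeNth y)]
  have hx : ∀ k : Fin (I' + 1), (i.removeNth x) k = x (i.succAbove k) := fun _ => rfl
  have hy : ∀ l : Fin (J' + 1), (j.removeNth y) l = y (j.succAbove l) := fun _ => rfl
  simp only [hx, hy]
  rw [Fin.prod_univ_succAbove (fun k => P₁ u (x k)) i,
    Fin.prod_univ_succAbove (fun l => P₂ u (y l)) j]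
  ring
end
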